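/- Let θ ∈ [0, 1/8). Define k̄(v,u) = (|v-u| + |v-u|^{-1})·exp(-|v-u|²/8)·exp(-(|v|²-|u|²)²/(8|v-u|²)) for u ≠ v. Then there exists a constant C_θ > 0 such that for all v ∈ ℝ³, ∫_{ℝ³} k̄(v,u)·e^{θ|v|²}/e^{θ|u|²} du ≤ C_θ·(1 + |v|)^{-1}. -/

import Mathlib

open MeasureTheory Real Set

private lemma aux_exp_inv {x : ℝ} (hx : 0 ≤ x) : Real.exp (-x) ≤ (1 + x)⁻¹ := by
  rw [Real.exp_neg]
  have h1 : (0:ℝ) < 1 + x := by linarith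
  have h2 : 1 + x ≤ Real.exp x := by have := Real.add_one_le_exp x; linarith
  exact inv_anti₀ h1 h2

private lemma aux_mul_exp {b t : ℝ} (hb : 0 < b) (ht : 0 ≤ t) :
    t * Real.exp (-(b * t ^ 2)) ≤ (2 * Real.sqrt b)⁻¹ := by
  have h1 := aux_exp_inv (x := b * t ^ 2) (by positivity)
  have hsb : 0 < Real.sqrt b := Real.sqrt_pos.mpr hb
  have hb2 : Real.sqrt b ^ 2 = b := Real.sq_sqrt hb.le
  have h2 : t * Real.exp (-(b * t ^ 2)) ≤ t * (1 + b * t ^ 2)⁻¹ :=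
    mul_le_mul_of_nonneg_left h1 ht
  refine h2.trans ?_
  rw [← div_eq_mul_inv, inv_eq_one_div, div_le_div_iff₀ (by positivity) (by positivity)]
  nlinarith [sq_nonneg (Real.sqrt b * t - 1)]

private lemma aux_exponent (θ c' κ R D p : ℝ) (hR : 0 < R) (hc'def : c' = 1/16 - 4*θ^2)
    (hc0 : 0 < c') (hκdef : κ = Real.sqrt c' / 2) (hp : p^2 ≤ D^2/2 + R^2/2) :
    -R/8 - D^2/(8*R) + θ*D ≤ -(c'/2)*R - κ*|p| := by
  have hκ0 : 0 ≤ κ := by rw [hκdef]; positivity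
  have hκ2 : κ^2 = c'/4 := by
    rw [hκdef, div_pow, Real.sq_sqrt hc0.le]; norm_num
  have h8R : (0:ℝ) < 8*R := by linarith
  have key : (-R/8 - D^2/(8*R) + θ*D) * (8*R) ≤ (-(c'/2)*R - κ*|p|) * (8*R) := by
    have e1 : (-R/8 - D^2/(8*R) + θ*D) * (8*R) = -(R*R) - D^2 + 8*θ*D*R := by
      field_simp
    rw [e1]
    nlinarith [sq_nonneg (D - 8*θ*R), sq_nonneg (|p| - 4*κ*R), sq_abs p, abs_nonneg p,
      mul_pos hR hR]
  exact le_of_mul_le_mul_right key h8R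

private lemma aux_exists_adapted_basis (v : EuclideanSpace ℝ (Fin 3)) :
    ∃ b : OrthonormalBasis (Fin 3) ℝ (EuclideanSpace ℝ (Fin 3)),
      ∀ η, (inner ℝ v η : ℝ) = ‖v‖ * b.repr η 0 := by
  rcases eq_or_ne v 0 with rfl | hv
  · exact ⟨EuclideanSpace.basisFun (Fin 3) ℝ, fun η => by simp⟩
  · have hvn : ‖v‖ ≠ 0 := norm_ne_zero_iff.mpr hv
    have horth : Orthonormal ℝ (({0} : Set (Fin 3)).restrict fun _ : Fin 3 => (‖v‖⁻¹ • v)) := by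
      constructor
      · intro i
        show ‖‖v‖⁻¹ • v‖ = 1
        simp [norm_smul, abs_of_nonneg (norm_nonneg v), inv_mul_cancel₀ hvn]
      · intro i j hij
        exfalso
        apply hij
        apply Subtype.ext
        have hi : (i : Fin 3) ∈ ({0} : Set (Fin 3)) := i.2
        have hj : (j : Fin 3) ∈ ({0} : Set (Fin 3)) := j.2
        simp only [Set.mem_singleton_iff] at hi hj
        rw [hi, hj]
    obtain ⟨b, hb⟩ := horth.exists_orthonormalBasis_extension_of_card_eq (by simp) 
    refine ⟨b, fun η => ?_⟩
    rw [b.repr_apply_apply, hb 0 rfl, real_inner_smul_left]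
    field_simp

private lemma aux_integral_exp_abs {m : ℝ} (hm : 0 < m) :
    Integrable (fun t : ℝ => Real.exp (-(m * |t|))) ∧
      ∫ t : ℝ, Real.exp (-(m * |t|)) = 2 / m := by
  have hIoi : IntegrableOn (fun x : ℝ => Real.exp (-m * x)) (Set.Ioi 0) :=
    exp_neg_integrableOn_Ioi 0 hm
  have hae : ∀ᵐ t : ℝ, t ≠ 0 := by
    rw [MeasureTheory.ae_iff]
    simpa using Real.volume_singleton (a := 0)
  constructor
  · have hG : Integrable
        (fun t : ℝ => Set.indicator (Set.Ioi (0:ℝ)) (fun x => Real.exp (-m*x)) t) := by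
      rwa [integrable_indicator_iff measurableSet_Ioi]
    refine (hG.add hG.comp_neg).congr ?_
    filter_upwards [hae] with t ht
    simp only [Pi.add_apply]
    rcases ht.lt_or_gt with h | h
    · rw [Set.indicator_of_notMem (a := t) (by simp [h.le] : t ∉ Set.Ioi (0:ℝ)),
        Set.indicator_of_mem (by simpa using h : -t ∈ Set.Ioi (0:ℝ))]
      rw [abs_of_neg h]; ring_nf
    · rw [Set.indicator_of_mem (by simpa using h : t ∈ Set.Ioi (0:ℝ)),
        Set.indicator_of_notMem (by simp [h.le] : -t ∉ Set.Ioi (0:ℝ))]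
      rw [abs_of_pos h]; ring_nf
  · have h1 : ∫ t : ℝ, Real.exp (-(m * |t|)) = 2 * ∫ t in Set.Ioi (0:ℝ), Real.exp (-(m * t)) := by
      exact integral_comp_abs (f := fun t => Real.exp (-(m * t)))
    rw [h1]
    have h2 : ∫ t in Set.Ioi (0:ℝ), Real.exp (-(m * t)) = 1 / m := by
      have h3 := integral_exp_neg_mul_rpow (p := 1) (b := m) one_pos hm
      simp only [Real.rpow_one] at h3
      rw [show (fun t : ℝ => Real.exp (-(m * t))) = fun t : ℝ => Real.exp (-m * t) by
        funext t; ring_nf, h3]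
      norm_num [Real.rpow_neg_one, Real.Gamma_two]
    rw [h2]; ring

private lemma aux_integrable_g1 {b : ℝ} (hb : 0 < b) :
    Integrable (fun t : ℝ => (Real.sqrt |t|)⁻¹ * Real.exp (-(b * t ^ 2))) := by
  have hIoi : IntegrableOn (fun x : ℝ => x ^ (-(1:ℝ)/2) * Real.exp (-b * x ^ 2)) (Set.Ioi 0) :=
    integrableOn_rpow_mul_exp_neg_mul_sq hb (by norm_num)
  have hh : Integrable (fun t : ℝ => (Real.sqrt t)⁻¹ * Real.exp (-(b * t ^ 2))) := by
    rw [← integrableOn_univ, ← Set.Iic_union_Ioi (a := (0:ℝ)), integrableOn_union]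
    constructor
    · refine (integrableOn_zero (ε' := ℝ)).congr_fun (fun t ht => ?_) measurableSet_Iic
      have : Real.sqrt t = 0 := Real.sqrt_eq_zero'.mpr ht
      simp [this]
    · refine hIoi.congr_fun (fun t ht => ?_) measurableSet_Ioi
      have ht0 : (0:ℝ) ≤ t := le_of_lt ht
      rw [Real.sqrt_eq_rpow, ← Real.rpow_neg ht0]
      norm_num
  have hfun : (fun t : ℝ => (Real.sqrt |t|)⁻¹ * Real.exp (-(b * t ^ 2)))
      = fun t : ℝ => (Real.sqrt t)⁻¹ * Real.exp (-(b * t ^ 2))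
        + (Real.sqrt (-t))⁻¹ * Real.exp (-(b * (-t) ^ 2)) := by
    funext t
    have hnsq : -(b * (-t) ^ 2) = -(b * t ^ 2) := by ring
    rw [hnsq]
    rcases lt_trichotomy t 0 with h | h | h
    · rw [abs_of_neg h, Real.sqrt_eq_zero'.mpr h.le]
      simp
    · subst h; simp
    · rw [abs_of_pos h, Real.sqrt_eq_zero'.mpr (by linarith : -t ≤ 0)]
      simp
  rw [hfun]
  exact hh.add hh.comp_neg

set_option maxHeartbeats 1000000 in
/-- Grad-type kernel estimate: for `θ ∈ [0,1/8)`,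
`∫ k̄(v,u) e^{θ|v|²}/e^{θ|u|²} du ≤ C_θ (1+|v|)⁻¹`. -/
theorem grad_kernel_estimate (θ : ℝ) (hθ0 : 0 ≤ θ) (hθ : θ < 1/8) :
    ∃ C : ℝ, 0 < C ∧ ∀ v : EuclideanSpace ℝ (Fin 3),
      (∫ u : EuclideanSpace ℝ (Fin 3),
        ((‖v - u‖ + ‖v - u‖⁻¹) * Real.exp (-‖v - u‖ ^ 2 / 8) *
            Real.exp (-(‖v‖ ^ 2 - ‖u‖ ^ 2) ^ 2 / (8 * ‖v - u‖ ^ 2))) *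
          Real.exp (θ * ‖v‖ ^ 2) / Real.exp (θ * ‖u‖ ^ 2))
        ≤ C * (1 + ‖v‖)⁻¹ := by
  classical
  obtain ⟨c', hc'def⟩ : ∃ x : ℝ, x = 1/16 - 4*θ^2 := ⟨_, rfl⟩
  have hc0 : 0 < c' := by rw [hc'def]; nlinarith
  obtain ⟨κ, hκdef⟩ : ∃ x : ℝ, x = Real.sqrt c' / 2 := ⟨_, rfl⟩
  have hκ0 : 0 < κ := by rw [hκdef]; positivity
  obtain ⟨bb, hbbdef⟩ : ∃ x : ℝ, x = c'/4 := ⟨_, rfl⟩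
  have hbb : 0 < bb := by rw [hbbdef]; exact div_pos hc0 (by norm_num)
  obtain ⟨M, hMdef⟩ : ∃ x : ℝ, x = (2 * Real.sqrt bb)⁻¹ := ⟨_, rfl⟩
  have hM0 : 0 ≤ M := by rw [hMdef]; positivity
  obtain ⟨gauss, hgaussdef⟩ : ∃ x : ℝ → ℝ, x = fun t => Real.exp (-(bb * t ^ 2)) := ⟨_, rfl⟩
  obtain ⟨g1, hg1def⟩ : ∃ x : ℝ → ℝ, x = fun t => (Real.sqrt |t|)⁻¹ * Real.exp (-(bb * t ^ 2)) := ⟨_, rfl⟩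
  obtain ⟨f0, hf0def⟩ : ∃ x : ℝ → ℝ → ℝ,
      x = fun a t => Real.exp (-(bb * t ^ 2)) * Real.exp (-(κ * a * |t|)) := ⟨_, rfl⟩
  have hgauss_int : Integrable gauss := by
    have := integrable_exp_neg_mul_sq hbb
    simpa [hgaussdef, neg_mul] using this
  have hg1_int : Integrable g1 := by rw [hg1def]; exact aux_integrable_g1 hbb
  have hgauss_nonneg : ∀ t, 0 ≤ gauss t := fun t => by
    rw [hgaussdef]; exact (Real.exp_pos _).le
  have hf0_nonneg : ∀ a t, 0 ≤ f0 a t := fun a t => by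
    simp only [hf0def]; positivity
  have hf0_le_gauss : ∀ a, 0 ≤ a → ∀ t, f0 a t ≤ gauss t := by
    intro a ha t
    simp only [hf0def, hgaussdef]
    have h1 : Real.exp (-(κ * a * |t|)) ≤ 1 := by
      have h2 : -(κ * a * |t|) ≤ 0 := neg_nonpos.mpr (by positivity)
      simpa using Real.exp_le_exp.mpr h2
    calc Real.exp (-(bb * t ^ 2)) * Real.exp (-(κ * a * |t|))
        ≤ Real.exp (-(bb * t ^ 2)) * 1 :=
          mul_le_mul_of_nonneg_left h1 (Real.exp_pos _).le
      _ = Real.exp (-(bb * t ^ 2)) := mul_one _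
  have hf0_int : ∀ a, 0 ≤ a → Integrable (f0 a) := by
    intro a ha
    refine hgauss_int.mono ?_ (ae_of_all _ fun t => ?_)
    · apply Continuous.aestronglyMeasurable
      simp only [hf0def]
      fun_prop
    · rw [Real.norm_eq_abs, Real.norm_eq_abs, abs_of_nonneg (hf0_nonneg a t),
        abs_of_nonneg (hgauss_nonneg t)]
      exact hf0_le_gauss a ha t
  obtain ⟨A, hAdef⟩ : ∃ x : ℝ, x = ∫ t, gauss t := ⟨_, rfl⟩
  obtain ⟨B, hBdef⟩ : ∃ x : ℝ, x = ∫ t, g1 t := ⟨_, rfl⟩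
  have hA0 : 0 ≤ A := by rw [hAdef]; exact integral_nonneg hgauss_nonneg
  have hB0 : 0 ≤ B := by
    rw [hBdef]; refine integral_nonneg fun t => ?_; simp only [hg1def]; positivity
  have hf0_int_le : ∀ a, 0 ≤ a → (1 + a) * (∫ t, f0 a t) ≤ A + 2/κ := by
    intro a ha
    have hI0A : (∫ t, f0 a t) ≤ A := by
      rw [hAdef]
      exact integral_mono_of_nonneg (ae_of_all _ (hf0_nonneg a)) hgauss_int
        (ae_of_all _ (hf0_le_gauss a ha))
    have haI0 : a * (∫ t, f0 a t) ≤ 2/κ := by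
      rcases ha.eq_or_lt with h | h
      · rw [← h, zero_mul]; positivity
      · have hm : 0 < κ * a := mul_pos hκ0 h
        have haux := aux_integral_exp_abs hm
        have hI0m : (∫ t, f0 a t) ≤ ∫ t, Real.exp (-(κ * a * |t|)) := by
          refine integral_mono_of_nonneg (ae_of_all _ (hf0_nonneg a)) haux.1
            (ae_of_all _ fun t => ?_)
          simp only [hf0def]
          calc Real.exp (-(bb * t ^ 2)) * Real.exp (-(κ * a * |t|))
              ≤ 1 * Real.exp (-(κ * a * |t|)) := by
                refine mul_le_mul_of_nonneg_right ?_ (Real.exp_pos _).le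
                have h2 : -(bb * t ^ 2) ≤ 0 := neg_nonpos.mpr (by positivity)
                simpa using Real.exp_le_exp.mpr h2
            _ = Real.exp (-(κ * a * |t|)) := one_mul _
        calc a * (∫ t, f0 a t) ≤ a * (2/(κ*a)) :=
              mul_le_mul_of_nonneg_left (hI0m.trans_eq haux.2) ha
          _ = 2/κ := by field_simp
    have hexpand : (1 + a) * (∫ t, f0 a t) = (∫ t, f0 a t) + a * (∫ t, f0 a t) := by ring
    rw [hexpand]
    exact add_le_add hI0A haI0
  refine ⟨max 1 ((M * A^2 + B^2) * (A + 2/κ)),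
    lt_of_lt_of_le one_pos (le_max_left _ _), fun v => ?_⟩
  obtain ⟨bv, hbv⟩ := aux_exists_adapted_basis v
  have ha0 : 0 ≤ ‖v‖ := norm_nonneg v
  obtain ⟨Ff, hFfdef⟩ : ∃ x : Fin 3 → ℝ → ℝ, x = ![f0 ‖v‖, gauss, gauss] := ⟨_, rfl⟩
  obtain ⟨Gf, hGfdef⟩ : ∃ x : Fin 3 → ℝ → ℝ, x = ![f0 ‖v‖, g1, g1] := ⟨_, rfl⟩
  have hFf_int : ∀ i, Integrable (Ff i) := by
    intro i; fin_cases i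
    · simpa [hFfdef] using hf0_int ‖v‖ ha0
    · simpa [hFfdef] using hgauss_int
    · simpa [hFfdef] using hgauss_int
  have hGf_int : ∀ i, Integrable (Gf i) := by
    intro i; fin_cases i
    · simpa [hGfdef] using hf0_int ‖v‖ ha0
    · simpa [hGfdef] using hg1_int
    · simpa [hGfdef] using hg1_int
  obtain ⟨P, hPdef⟩ : ∃ x : (Fin 3 → ℝ) → ℝ,
      x = fun y => M * ∏ i, Ff i (y i) + ∏ i, Gf i (y i) := ⟨_, rfl⟩
  have hPint : Integrable P := by
    rw [hPdef]
    exact ((Integrable.fintype_prod hFf_int).const_mul M).add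
      (Integrable.fintype_prod hGf_int)
  obtain ⟨T, hTdef⟩ : ∃ x : EuclideanSpace ℝ (Fin 3) ≃ᵐ (Fin 3 → ℝ),
      x = (MeasurableEquiv.subLeft v).trans
        ((bv.repr.toMeasurableEquiv).trans (MeasurableEquiv.toLp 2 (Fin 3 → ℝ)).symm) := ⟨_, rfl⟩
  have hTcoe : ∀ u i, T u i = bv.repr (v - u) i := fun u i => by rw [hTdef]; rfl
  have hT : MeasurePreserving T volume volume := by
    rw [hTdef]
    have h1 := Measure.measurePreserving_sub_left
      (volume : Measure (EuclideanSpace ℝ (Fin 3))) v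
    have h2 := bv.repr.measurePreserving
    have h3 := EuclideanSpace.volume_preserving_symm_measurableEquiv_toLp (Fin 3)
    exact (h3.comp h2).comp h1
  have hplane : ∀ i : Fin 3, volume {x : Fin 3 → ℝ | x i = 0} = 0 := by
    intro i
    have hset : {x : Fin 3 → ℝ | x i = 0}
        = Set.pi Set.univ (fun j => if j = i then ({0} : Set ℝ) else Set.univ) := by
      ext x
      simp only [Set.mem_setOf_eq, Set.mem_pi, Set.mem_univ, true_implies]
      constructor
      · intro h j
        by_cases hj : j = i
        · subst hj; simpa using h
        · simp [hj]
      · intro h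
        simpa using h i
    rw [hset, volume_pi_pi]
    refine Finset.prod_eq_zero (Finset.mem_univ i) ?_
    simp
  have hSm : MeasurableSet ({x : Fin 3 → ℝ | x 1 = 0} ∪ {x : Fin 3 → ℝ | x 2 = 0}) :=
    MeasurableSet.union ((measurable_pi_apply 1) (measurableSet_singleton 0))
      ((measurable_pi_apply 2) (measurableSet_singleton 0))
  have hae : ∀ᵐ u : EuclideanSpace ℝ (Fin 3), T u 1 ≠ 0 ∧ T u 2 ≠ 0 := by
    have h0 : volume (⇑T ⁻¹' ({x : Fin 3 → ℝ | x 1 = 0} ∪ {x : Fin 3 → ℝ | x 2 = 0})) = 0 := by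
      rw [hT.measure_preimage hSm.nullMeasurableSet]
      exact measure_union_null (hplane 1) (hplane 2)
    filter_upwards [measure_eq_zero_iff_ae_notMem.mp h0] with u hu
    simp only [Set.mem_preimage, Set.mem_union, Set.mem_setOf_eq] at hu
    push_neg at hu
    exact hu
  have hmain : ∀ᵐ u : EuclideanSpace ℝ (Fin 3),
      ((‖v - u‖ + ‖v - u‖⁻¹) * Real.exp (-‖v - u‖ ^ 2 / 8) *
          Real.exp (-(‖v‖ ^ 2 - ‖u‖ ^ 2) ^ 2 / (8 * ‖v - u‖ ^ 2))) *
        Real.exp (θ * ‖v‖ ^ 2) / Real.exp (θ * ‖u‖ ^ 2) ≤ P (T u) := by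
    filter_upwards [hae] with u hu
    obtain ⟨hu1, hu2⟩ := hu
    obtain ⟨r, hrdef⟩ : ∃ x : ℝ, x = ‖v - u‖ := ⟨_, rfl⟩
    rw [← hrdef]
    have hr0 : 0 ≤ r := by rw [hrdef]; exact norm_nonneg _
    obtain ⟨D, hDdef⟩ : ∃ x : ℝ, x = ‖v‖^2 - ‖u‖^2 := ⟨_, rfl⟩
    rw [show (-(‖v‖ ^ 2 - ‖u‖ ^ 2) ^ 2 : ℝ) = -D^2 by rw [hDdef]]
    obtain ⟨q, hqdef⟩ : ∃ x : ℝ, x = (inner ℝ v (v - u) : ℝ) := ⟨_, rfl⟩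
    have hq_eq : q = ‖v‖ * T u 0 := by rw [hqdef, hbv (v - u), hTcoe u 0]
    have hrpos : 0 < r := by
      rcases hr0.lt_or_eq with h | h
      · exact h
      · exfalso; apply hu1
        have hz : ‖v - u‖ = 0 := by rw [← hrdef, ← h]
        have hz2 : v - u = 0 := norm_eq_zero.mp hz
        rw [hTcoe u 1, hz2]
        simp
    have hR : 0 < r ^ 2 := by positivity
    have hsum : r ^ 2 = (T u 0)^2 + ((T u 1)^2 + (T u 2)^2) := by
      have h1 : r = ‖bv.repr (v - u)‖ := by rw [hrdef, bv.repr.norm_map (v - u)]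
      rw [h1, EuclideanSpace.norm_eq, Real.sq_sqrt (by positivity), Fin.sum_univ_three]
      simp only [Real.norm_eq_abs, sq_abs]
      rw [hTcoe u 0, hTcoe u 1, hTcoe u 2]
      ring
    have hD_eq : D = 2*q - r^2 := by
      have h2 : ‖u‖^2 = ‖v‖^2 - 2 * q + r^2 := by
        rw [hqdef, hrdef]
        calc ‖u‖^2 = ‖v - (v - u)‖^2 := by rw [sub_sub_cancel]
          _ = ‖v‖^2 - 2 * (inner ℝ v (v - u) : ℝ) + ‖v - u‖^2 := norm_sub_sq_real v (v - u)
      rw [hDdef, h2]; ring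
    have hq2 : q^2 ≤ D^2/2 + (r^2)^2/2 := by nlinarith [hD_eq, sq_nonneg (D - r^2)]
    have hexp := aux_exponent θ c' κ (r^2) D q hR hc'def hc0 hκdef hq2
    have e34 : Real.exp (θ * ‖v‖^2) / Real.exp (θ * ‖u‖^2) = Real.exp (θ * D) := by
      rw [← Real.exp_sub]; congr 1; rw [hDdef]; ring
    rw [mul_div_assoc, e34]
    have hcomb : (r + r⁻¹) * Real.exp (-r^2/8) * Real.exp (-D^2/(8*r^2)) *
        Real.exp (θ*D) = (r + r⁻¹) * Real.exp (-r^2/8 - D^2/(8*r^2) + θ*D) := by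
      rw [show -r^2/8 - D^2/(8*r^2) + θ*D = (-r^2/8) + ((-D^2/(8*r^2)) + θ*D) by ring,
        Real.exp_add, Real.exp_add]
      ring
    calc (r + r⁻¹) * Real.exp (-r^2/8) * Real.exp (-D^2/(8*r^2)) * Real.exp (θ*D)
        = (r + r⁻¹) * Real.exp (-r^2/8 - D^2/(8*r^2) + θ*D) := hcomb
      _ ≤ (r + r⁻¹) * Real.exp (-(c'/2)*r^2 - κ*|q|) := by
          refine mul_le_mul_of_nonneg_left (Real.exp_le_exp.mpr ?_) (by positivity)
          exact hexp
      _ = (r + r⁻¹) * (Real.exp (-(bb*r^2)) * Real.exp (-(bb*r^2) - κ*|q|)) := by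
          rw [← Real.exp_add]
          congr 2
          rw [hbbdef]; ring
      _ = (r * Real.exp (-(bb*r^2)) + r⁻¹ * Real.exp (-(bb*r^2)))
            * Real.exp (-(bb*r^2) - κ*|q|) := by ring
      _ ≤ (M + (Real.sqrt |T u 1|)⁻¹ * (Real.sqrt |T u 2|)⁻¹)
            * Real.exp (-(bb*r^2) - κ*|q|) := by
          refine mul_le_mul_of_nonneg_right (add_le_add ?_ ?_) (Real.exp_pos _).le
          · rw [hMdef]; exact aux_mul_exp hbb hr0
          · have hE1 : Real.exp (-(bb*r^2)) ≤ 1 := by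
              have h2 : -(bb*r^2) ≤ 0 := neg_nonpos.mpr (by positivity)
              simpa using Real.exp_le_exp.mpr h2
            have h12 : Real.sqrt |T u 1| * Real.sqrt |T u 2| ≤ r := by
              rw [← Real.sqrt_mul (abs_nonneg _), ← Real.sqrt_sq hr0]
              apply Real.sqrt_le_sqrt
              nlinarith [hsum, sq_abs (T u 1), sq_abs (T u 2),
                sq_nonneg (|T u 1| - |T u 2|), sq_nonneg (T u 0)]
            have hpos1 : 0 < Real.sqrt |T u 1| := Real.sqrt_pos.mpr (abs_pos.mpr hu1)
            have hpos2 : 0 < Real.sqrt |T u 2| := Real.sqrt_pos.mpr (abs_pos.mpr hu2)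
            calc r⁻¹ * Real.exp (-(bb*r^2)) ≤ r⁻¹ * 1 :=
                  mul_le_mul_of_nonneg_left hE1 (by positivity)
              _ = r⁻¹ := mul_one _
              _ ≤ (Real.sqrt |T u 1| * Real.sqrt |T u 2|)⁻¹ :=
                  inv_anti₀ (mul_pos hpos1 hpos2) h12
              _ = (Real.sqrt |T u 1|)⁻¹ * (Real.sqrt |T u 2|)⁻¹ := mul_inv _ _
      _ = P (T u) := by
          have habsq : |q| = ‖v‖ * |T u 0| := by
            rw [hq_eq, abs_mul, abs_of_nonneg ha0]
          have e4 : -(bb*r^2) - κ*|q| = (-(bb*(T u 0)^2) + -(κ * ‖v‖ * |T u 0|))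
              + (-(bb*(T u 1)^2) + -(bb*(T u 2)^2)) := by
            rw [hsum, habsq]; ring
          rw [e4, Real.exp_add, Real.exp_add, Real.exp_add]
          simp only [hPdef, hFfdef, hGfdef, Fin.prod_univ_three, Matrix.cons_val_zero,
            Matrix.cons_val_one, Matrix.head_cons, Matrix.cons_val_two, Matrix.tail_cons,
            hf0def, hgaussdef, hg1def]
          ring
  have hPTint : Integrable (fun u => P (T u)) :=
    (hT.integrable_comp_emb T.measurableEmbedding).mpr hPint
  have step1 : (∫ u : EuclideanSpace ℝ (Fin 3),
      ((‖v - u‖ + ‖v - u‖⁻¹) * Real.exp (-‖v - u‖ ^ 2 / 8) *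
          Real.exp (-(‖v‖ ^ 2 - ‖u‖ ^ 2) ^ 2 / (8 * ‖v - u‖ ^ 2))) *
        Real.exp (θ * ‖v‖ ^ 2) / Real.exp (θ * ‖u‖ ^ 2)) ≤ ∫ u, P (T u) := by
    refine integral_mono_of_nonneg (ae_of_all _ fun u => ?_) hPTint hmain
    positivity
  have step2 : (∫ u, P (T u)) = ∫ x, P x :=
    hT.integral_comp T.measurableEmbedding P
  have step3 : (∫ x, P x) = M * ((∫ t, f0 ‖v‖ t) * (A * A)) + (∫ t, f0 ‖v‖ t) * (B * B) := by
    rw [hPdef]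
    beta_reduce
    rw [volume_pi]
    rw [integral_add ((Integrable.fintype_prod hFf_int).const_mul M)
      (Integrable.fintype_prod hGf_int), integral_const_mul,
      integral_fin_nat_prod_eq_prod Ff, integral_fin_nat_prod_eq_prod Gf,
      Fin.prod_univ_three, Fin.prod_univ_three]
    rw [hAdef, hBdef]
    simp only [hFfdef, hGfdef, Matrix.cons_val_zero, Matrix.cons_val_one, Matrix.head_cons,
      Matrix.cons_val_two, Matrix.tail_cons]
    ring
  have hI0 := hf0_int_le ‖v‖ ha0
  have hcoef : 0 ≤ M * A^2 + B^2 := by positivity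
  have h1a : (0:ℝ) < 1 + ‖v‖ := by linarith
  have hfinal : M * ((∫ t, f0 ‖v‖ t) * (A * A)) + (∫ t, f0 ‖v‖ t) * (B * B)
      ≤ max 1 ((M * A^2 + B^2) * (A + 2/κ)) * (1 + ‖v‖)⁻¹ := by
    rw [← div_eq_mul_inv, le_div_iff₀ h1a]
    calc (M * ((∫ t, f0 ‖v‖ t) * (A * A)) + (∫ t, f0 ‖v‖ t) * (B * B)) * (1 + ‖v‖)
        = (M * A^2 + B^2) * ((1 + ‖v‖) * (∫ t, f0 ‖v‖ t)) := by ring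
      _ ≤ (M * A^2 + B^2) * (A + 2/κ) := mul_le_mul_of_nonneg_left hI0 hcoef
      _ ≤ max 1 ((M * A^2 + B^2) * (A + 2/κ)) := le_max_right _ _
  calc (∫ u : EuclideanSpace ℝ (Fin 3),
      ((‖v - u‖ + ‖v - u‖⁻¹) * Real.exp (-‖v - u‖ ^ 2 / 8) *
          Real.exp (-(‖v‖ ^ 2 - ‖u‖ ^ 2) ^ 2 / (8 * ‖v - u‖ ^ 2))) *
        Real.exp (θ * ‖v‖ ^ 2) / Real.exp (θ * ‖u‖ ^ 2))
      ≤ ∫ u, P (T u) := step1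
    _ = ∫ x, P x := step2
    _ = M * ((∫ t, f0 ‖v‖ t) * (A * A)) + (∫ t, f0 ‖v‖ t) * (B * B) := step3
    _ ≤ max 1 ((M * A^2 + B^2) * (A + 2/κ)) * (1 + ‖v‖)⁻¹ := hfinal
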